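/- arXiv:2512.18688 — 3 statements merged into one kernel-verified Lean document; each statement's English description precedes it below -/
import Mathlib

section
/- Let d ≥ 2, 0 < s < 1, p ≥ 1. The function Φ(t) = ω_{d-2} ∫_{-1}^{1} (1-r²)^{(d-3)/2} (1-2tr+t²)^{-(d+sp)/2} dr satisfies Φ(t) ≍ (1-t)^{-1-sp} as t → 1⁻; that is, there exist constants 0 < c₁ ≤ c₂ and δ > 0 such that c₁(1-t)^{-1-sp} ≤ Φ(t) ≤ c₂(1-t)^{-1-sp} for all t ∈ (1-δ, 1). -/
open MeasureTheory Set

noncomputable section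

open intervalIntegral

lemma aux_rpow_bounds {x : ℝ} (β : ℝ) (h1 : 1/2 ≤ x) (h2 : x ≤ 2) :
    (2:ℝ)^(-|β|) ≤ x ^ β ∧ x ^ β ≤ (2:ℝ)^|β| := by
  have hx : (0:ℝ) < x := lt_of_lt_of_le (by norm_num) h1
  rcases le_total 0 β with hβ | hβ
  · rw [abs_of_nonneg hβ]
    refine ⟨?_, Real.rpow_le_rpow hx.le h2 hβ⟩
    calc (2:ℝ)^(-β) = ((1/2:ℝ))^β := by
          rw [Real.rpow_neg (by norm_num), ← Real.inv_rpow (by norm_num)]; norm_num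
      _ ≤ x ^ β := Real.rpow_le_rpow (by norm_num) (by linarith) hβ
  · rw [abs_of_nonpos hβ, neg_neg]
    refine ⟨Real.rpow_le_rpow_of_nonpos hx h2 hβ, ?_⟩
    calc x^β ≤ ((1/2:ℝ))^β := Real.rpow_le_rpow_of_nonpos (by norm_num) h1 hβ
      _ = (2:ℝ)^(-β) := by
          rw [Real.rpow_neg (by norm_num), ← Real.inv_rpow (by norm_num)]; norm_num

set_option maxHeartbeats 2000000 in
lemma integral_two_sided (β α : ℝ) (hβ : -1 < β) (hαβ : 1 < α - β) :
    ∃ c₁ c₂ : ℝ, 0 < c₁ ∧ 0 < c₂ ∧ ∀ t ∈ Ioo (1/2:ℝ) 1,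
      c₁ * (1-t) ^ (2*(β+1-α)) ≤ (∫ r in (-1:ℝ)..1, (1-r^2)^β * (1-2*t*r+t^2)^(-α)) ∧
      (∫ r in (-1:ℝ)..1, (1-r^2)^β * (1-2*t*r+t^2)^(-α)) ≤ c₂ * (1-t)^(2*(β+1-α)) := by
  have hβ1 : (0:ℝ) < β + 1 := by linarith
  have hα : (0:ℝ) < α := by linarith
  set M : ℝ := (2:ℝ)^|β| with hM
  have hM0 : 0 < M := Real.rpow_pos_of_pos two_pos _
  have hm0 : (0:ℝ) < (2:ℝ)^(-|β|) := Real.rpow_pos_of_pos two_pos _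
  have h3a : (0:ℝ) < (3:ℝ)^(-α) := Real.rpow_pos_of_pos (by norm_num) _
  refine ⟨(2:ℝ)^(-|β|) * (2:ℝ)^(-|β|) * (3:ℝ)^(-α) / 2,
    M/(β+1) + M/(α-β-1) + M/(β+1), by positivity,
    by have := div_pos hM0 hβ1; have := div_pos hM0 (by linarith : (0:ℝ) < α-β-1); positivity, ?_⟩
  rintro t ⟨ht, ht1⟩
  have ht0 : (0:ℝ) < t := by linarith
  set ε : ℝ := 1 - t with hεdef
  have hε : 0 < ε := by simp only [hεdef]; linarith
  have hεh : ε ≤ 1/2 := by simp only [hεdef]; linarith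
  have hε2 : (0:ℝ) < ε^2 := by positivity
  have hε2h : ε^2 ≤ 1/4 := by nlinarith
  set F : ℝ → ℝ := fun r => (1-r^2)^β * (1-2*t*r+t^2)^(-α) with hF
  have hQ : ∀ r : ℝ, 1 - 2*t*r + t^2 = ε^2 + 2*t*(1-r) := by
    intro r; simp only [hεdef]; ring
  have hQge : ∀ r : ℝ, r ≤ 1 → ε^2 ≤ 1-2*t*r+t^2 := by
    intro r hr; rw [hQ]; nlinarith
  have hQpos : ∀ r : ℝ, r ≤ 1 → (0:ℝ) < 1-2*t*r+t^2 := by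
    intro r hr; exact lt_of_lt_of_le hε2 (hQge r hr)
  have hf0 : ∀ r ∈ Icc (-1:ℝ) 1, 0 ≤ F r := by
    intro r hr
    exact mul_nonneg (Real.rpow_nonneg (by nlinarith [hr.1, hr.2]) _)
      (Real.rpow_nonneg (le_of_lt (hQpos r hr.2)) _)
  have hsplit : ∀ r ∈ Icc (-1:ℝ) 1, (1-r^2:ℝ)^β = (1-r)^β * (1+r)^β := by
    intro r hr
    rw [show (1:ℝ)-r^2 = (1-r)*(1+r) by ring,
      Real.mul_rpow (by linarith [hr.2]) (by linarith [hr.1])]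
  -- uniform upper bounds on [0,1] and [-1,0]
  have hub_right : ∀ r ∈ Icc (0:ℝ) 1, F r ≤ M * (ε^2)^(-α) * (1-r)^β := by
    intro r hr
    have h1 : (1-r^2:ℝ)^β ≤ (1-r)^β * M := by
      rw [hsplit r ⟨by linarith [hr.1], hr.2⟩]
      exact mul_le_mul_of_nonneg_left
        ((aux_rpow_bounds β (by linarith [hr.1]) (by linarith [hr.2])).2)
        (Real.rpow_nonneg (by linarith [hr.2]) _)
    have h2 : (1-2*t*r+t^2:ℝ)^(-α) ≤ (ε^2)^(-α) :=
      Real.rpow_le_rpow_of_nonpos hε2 (hQge r hr.2) (by linarith)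
    calc F r ≤ ((1-r)^β * M) * (ε^2)^(-α) := by
          exact mul_le_mul h1 h2 (Real.rpow_nonneg (le_of_lt (hQpos r hr.2)) _)
            (mul_nonneg (Real.rpow_nonneg (by linarith [hr.2]) _) hM0.le)
      _ = M * (ε^2)^(-α) * (1-r)^β := by ring
  have hub_left : ∀ r ∈ Icc (-1:ℝ) 0, F r ≤ M * (1+r)^β := by
    intro r hr
    have h1 : (1-r^2:ℝ)^β ≤ M * (1+r)^β := by
      rw [hsplit r ⟨hr.1, by linarith [hr.2]⟩]
      exact mul_le_mul_of_nonneg_right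
        ((aux_rpow_bounds β (by linarith [hr.2]) (by linarith [hr.1])).2)
        (Real.rpow_nonneg (by linarith [hr.1]) _)
    have hQ1 : (1:ℝ) ≤ 1-2*t*r+t^2 := by nlinarith [hr.2]
    have h2 : (1-2*t*r+t^2:ℝ)^(-α) ≤ 1 := by
      have := Real.rpow_le_rpow_of_nonpos one_pos hQ1 (by linarith : -α ≤ 0)
      simpa using this
    calc F r ≤ (M * (1+r)^β) * 1 := by
          exact mul_le_mul h1 h2 (Real.rpow_nonneg (le_of_lt (hQpos r (by linarith [hr.2]))) _)
            (mul_nonneg hM0.le (Real.rpow_nonneg (by linarith [hr.1]) _))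
      _ = M * (1+r)^β := by ring
  -- integrability
  have int_u : IntervalIntegrable (fun u : ℝ => u ^ β) volume 0 1 :=
    intervalIntegral.intervalIntegrable_rpow' hβ
  have int_g2 : IntervalIntegrable (fun r : ℝ => (1-r)^β) volume 0 1 := by
    have h := (int_u.comp_sub_left 1).symm
    simpa using h
  have int_g1 : IntervalIntegrable (fun r : ℝ => (1+r)^β) volume (-1) 0 := by
    have h := int_u.comp_add_right 1
    simp only [zero_sub, sub_self] at h
    have : (fun x : ℝ => (x + 1)^β) = (fun x : ℝ => (1 + x)^β) := by
      funext x; rw [add_comm]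
    rwa [this] at h
  have hmeasF : Measurable F := by fun_prop
  have int_fr : IntervalIntegrable F volume 0 1 := by
    apply ((int_g2.const_mul (M * (ε^2)^(-α)))).mono_fun'
      hmeasF.aestronglyMeasurable
    rw [uIoc_of_le (by norm_num : (0:ℝ) ≤ 1)]
    filter_upwards [ae_restrict_mem measurableSet_Ioc] with r hr
    rw [Real.norm_eq_abs, abs_of_nonneg (hf0 r ⟨by linarith [hr.1], hr.2⟩)]
    exact hub_right r ⟨hr.1.le, hr.2⟩
  have int_fl : IntervalIntegrable F volume (-1) 0 := by
    apply ((int_g1.const_mul M)).mono_fun' hmeasF.aestronglyMeasurable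
    rw [uIoc_of_le (by norm_num : (-1:ℝ) ≤ 0)]
    filter_upwards [ae_restrict_mem measurableSet_Ioc] with r hr
    rw [Real.norm_eq_abs, abs_of_nonneg (hf0 r ⟨hr.1.le, by linarith [hr.2]⟩)]
    exact hub_left r ⟨hr.1.le, hr.2⟩
  have int_f : IntervalIntegrable F volume (-1) 1 := int_fl.trans int_fr
  -- exponent conversion
  have hconv : ∀ γ : ℝ, (ε^2:ℝ) ^ γ = ε ^ (2*γ) := by
    intro γ
    rw [← Real.rpow_natCast ε 2, ← Real.rpow_mul hε.le]
    norm_num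
  have hεe : (0:ℝ) < ε ^ (2*(β+1-α)) := Real.rpow_pos_of_pos hε _
  have hεe1 : (1:ℝ) ≤ ε ^ (2*(β+1-α)) :=
    Real.one_le_rpow_of_pos_of_le_one_of_nonpos hε (by linarith) (by linarith)
  -- lower bound
  set a : ℝ := 1 - ε^2 with hadef
  set b : ℝ := 1 - ε^2/2 with hbdef
  have ham : (-1:ℝ) ≤ a := by simp only [hadef]; nlinarith
  have ha34 : (3/4:ℝ) ≤ a := by simp only [hadef]; nlinarith
  have hab : a ≤ b := by simp only [hadef, hbdef]; nlinarith
  have hb1 : b ≤ 1 := by simp only [hbdef]; nlinarith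
  have ha0 : (0:ℝ) ≤ a := by linarith
  have msub : ∀ c d : ℝ, -1 ≤ c → c ≤ d → d ≤ 1 → IntervalIntegrable F volume c d := by
    intro c d hc hcd hd
    refine int_f.mono_set ?_
    rw [uIcc_of_le hcd, uIcc_of_le (by norm_num : (-1:ℝ) ≤ 1)]
    exact Icc_subset_Icc hc hd
  have int1 : IntervalIntegrable F volume (-1) a := msub _ _ le_rfl ham (by linarith)
  have int2 : IntervalIntegrable F volume a b := msub _ _ ham hab hb1
  have int3 : IntervalIntegrable F volume b 1 := msub _ _ (by linarith) hb1 le_rfl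
  have hIsplit : (∫ r in (-1:ℝ)..1, F r)
      = (∫ r in (-1:ℝ)..a, F r) + ((∫ r in a..b, F r) + (∫ r in b..1, F r)) := by
    rw [integral_add_adjacent_intervals int2 int3,
      integral_add_adjacent_intervals int1 (int2.trans int3)]
  have hpos1 : 0 ≤ ∫ r in (-1:ℝ)..a, F r :=
    intervalIntegral.integral_nonneg ham (fun u hu => hf0 u ⟨hu.1, by linarith [hu.2]⟩)
  have hpos3 : 0 ≤ ∫ r in b..1, F r :=
    intervalIntegral.integral_nonneg hb1 (fun u hu => hf0 u ⟨by linarith [hu.1], hu.2⟩)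
  have hmid : ∀ r ∈ Icc a b,
      (2:ℝ)^(-|β|) * (2:ℝ)^(-|β|) * (ε^2)^β * (3*ε^2)^(-α) ≤ F r := by
    intro r hr
    obtain ⟨hra, hrb⟩ := hr
    have hr1 : r ≤ 1 := by linarith
    have hrm : -1 ≤ r := by linarith
    have h1r : ε^2/2 ≤ 1 - r := by rw [hbdef] at hrb; linarith
    have h1r' : 1 - r ≤ ε^2 := by rw [hadef] at hra; linarith
    have hx1 : (1:ℝ)/2 ≤ (1-r)/ε^2 := by rw [le_div_iff₀ hε2]; linarith
    have hx2 : (1-r)/ε^2 ≤ 2 := by rw [div_le_iff₀ hε2]; linarith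
    have e1 : (1-r:ℝ)^β = (ε^2)^β * ((1-r)/ε^2)^β := by
      rw [← Real.mul_rpow hε2.le (by positivity)]
      congr 1; field_simp
    have lb1 : (ε^2)^β * (2:ℝ)^(-|β|) ≤ (1-r)^β := by
      rw [e1]
      exact mul_le_mul_of_nonneg_left (aux_rpow_bounds β hx1 hx2).1
        (Real.rpow_nonneg hε2.le _)
    have lb2 : (2:ℝ)^(-|β|) ≤ (1+r)^β :=
      (aux_rpow_bounds β (by linarith) (by linarith)).1
    have hQle : 1-2*t*r+t^2 ≤ 3*ε^2 := by
      rw [hQ]; nlinarith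
    have lb3 : (3*ε^2:ℝ)^(-α) ≤ (1-2*t*r+t^2)^(-α) :=
      Real.rpow_le_rpow_of_nonpos (hQpos r hr1) hQle (by linarith)
    have hFr : F r = ((1-r)^β * (1+r)^β) * (1-2*t*r+t^2)^(-α) := by
      simp only [hF]
      rw [hsplit r ⟨hrm, hr1⟩]
    rw [hFr]
    have step1 : ((ε^2)^β * (2:ℝ)^(-|β|)) * ((2:ℝ)^(-|β|)) ≤ (1-r)^β * (1+r)^β :=
      mul_le_mul lb1 lb2 hm0.le (Real.rpow_nonneg (by linarith) _)
    calc (2:ℝ)^(-|β|) * (2:ℝ)^(-|β|) * (ε^2)^β * (3*ε^2)^(-α)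
        = (((ε^2)^β * (2:ℝ)^(-|β|)) * ((2:ℝ)^(-|β|))) * (3*ε^2)^(-α) := by ring
      _ ≤ ((1-r)^β * (1+r)^β) * (1-2*t*r+t^2)^(-α) :=
          mul_le_mul step1 lb3 (Real.rpow_nonneg (by positivity) _)
            (mul_nonneg (Real.rpow_nonneg (by linarith) _) (Real.rpow_nonneg (by linarith) _))
  have hmlb : (b - a) * ((2:ℝ)^(-|β|) * (2:ℝ)^(-|β|) * (ε^2)^β * (3*ε^2)^(-α))
      ≤ ∫ r in a..b, F r := by
    have h := intervalIntegral.integral_mono_on hab intervalIntegrable_const int2 hmid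
    rwa [intervalIntegral.integral_const, smul_eq_mul] at h
  have hba : b - a = ε^2/2 := by rw [hadef, hbdef]; ring
  have keylow : (b-a) * ((2:ℝ)^(-|β|) * (2:ℝ)^(-|β|) * (ε^2)^β * (3*ε^2)^(-α))
      = ((2:ℝ)^(-|β|) * (2:ℝ)^(-|β|) * (3:ℝ)^(-α) / 2) * ε ^ (2*(β+1-α)) := by
    rw [hba, Real.mul_rpow (by norm_num : (0:ℝ) ≤ 3) hε2.le, hconv β, hconv (-α),
      show (2:ℝ)*(β+1-α) = 2*β + (2*(-α) + 2) by ring, Real.rpow_add hε, Real.rpow_add hε,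
      show ε ^ (2:ℝ) = ε^2 by rw [show (2:ℝ) = ((2:ℕ):ℝ) by norm_num, Real.rpow_natCast]]
    ring
  have hlower : ((2:ℝ)^(-|β|) * (2:ℝ)^(-|β|) * (3:ℝ)^(-α) / 2) * ε ^ (2*(β+1-α))
      ≤ ∫ r in (-1:ℝ)..1, F r := by
    rw [hIsplit, ← keylow]; linarith
  -- upper bound
  have intA2 : IntervalIntegrable F volume 0 a := msub _ _ (by norm_num) ha0 (by linarith)
  have intA3 : IntervalIntegrable F volume a 1 := msub _ _ (by linarith) (by linarith) le_rfl
  have hIu : (∫ r in (-1:ℝ)..1, F r)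
      = (∫ r in (-1:ℝ)..0, F r) + ((∫ r in (0:ℝ)..a, F r) + (∫ r in a..1, F r)) := by
    rw [integral_add_adjacent_intervals intA2 intA3,
      integral_add_adjacent_intervals int_fl int_fr]
  -- piece 1
  have hP1 : (∫ r in (-1:ℝ)..0, F r) ≤ M/(β+1) := by
    have h := intervalIntegral.integral_mono_on (by norm_num : (-1:ℝ) ≤ 0) int_fl
      (int_g1.const_mul M) hub_left
    have hcomp : (∫ r in (-1:ℝ)..0, M * (1+r)^β) = M * (1/(β+1)) := by
      rw [intervalIntegral.integral_const_mul]
      have h3 := intervalIntegral.integral_comp_add_right (a := (-1:ℝ)) (b := 0)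
        (fun u : ℝ => u^β) 1
      simp only [neg_add_cancel, zero_add] at h3
      have h4 : (∫ r in (-1:ℝ)..0, (1+r)^β) = ∫ x in (-1:ℝ)..0, (x+1)^β := by
        congr 1; funext x; rw [add_comm]
      rw [h4, h3, integral_rpow (Or.inl hβ), Real.one_rpow,
        Real.zero_rpow (by linarith : β+1 ≠ 0)]
      norm_num
    calc (∫ r in (-1:ℝ)..0, F r) ≤ ∫ r in (-1:ℝ)..0, M * (1+r)^β := h
      _ = M * (1/(β+1)) := hcomp
      _ = M/(β+1) := by ring
  -- piece 3
  have hP3 : (∫ r in a..1, F r) ≤ M/(β+1) * ε ^ (2*(β+1-α)) := by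
    have hg : IntervalIntegrable (fun r : ℝ => M * (ε^2)^(-α) * (1-r)^β) volume a 1 := by
      refine (int_g2.const_mul (M * (ε^2)^(-α))).mono_set ?_
      rw [uIcc_of_le (by linarith : a ≤ 1), uIcc_of_le (by norm_num : (0:ℝ) ≤ 1)]
      exact Icc_subset_Icc ha0 le_rfl
    have h := intervalIntegral.integral_mono_on (by linarith : a ≤ 1) intA3 hg
      (fun r hr => hub_right r ⟨by linarith [hr.1], hr.2⟩)
    have hcomp : (∫ r in a..1, M * (ε^2)^(-α) * (1-r)^β)
        = M * (ε^2)^(-α) * ((ε^2)^(β+1)/(β+1)) := by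
      rw [intervalIntegral.integral_const_mul]
      have h3 := intervalIntegral.integral_comp_sub_left (a := a) (b := 1)
        (fun u : ℝ => u^β) 1
      simp only [sub_self] at h3
      rw [h3, show (1:ℝ) - a = ε^2 by rw [hadef]; ring, integral_rpow (Or.inl hβ),
        Real.zero_rpow (by linarith : β+1 ≠ 0)]
      ring
    have heq : M * (ε^2)^(-α) * ((ε^2)^(β+1)/(β+1)) = M/(β+1) * ε ^ (2*(β+1-α)) := by
      rw [hconv (-α), hconv (β+1),
        show M * ε^(2*(-α)) * (ε^(2*(β+1))/(β+1))
          = M/(β+1) * (ε^(2*(-α)) * ε^(2*(β+1))) by ring,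
        ← Real.rpow_add hε, show 2*(-α) + 2*(β+1) = 2*(β+1-α) by ring]
    calc (∫ r in a..1, F r) ≤ ∫ r in a..1, M * (ε^2)^(-α) * (1-r)^β := h
      _ = M/(β+1) * ε ^ (2*(β+1-α)) := by rw [hcomp, heq]
  -- piece 2
  have hP2 : (∫ r in (0:ℝ)..a, F r) ≤ M/(α-β-1) * ε ^ (2*(β+1-α)) := by
    have hpt : ∀ r ∈ Icc (0:ℝ) a, F r ≤ M * (1-r)^(β-α) := by
      intro r hr
      obtain ⟨hr0, hra⟩ := hr
      have h1r : ε^2 ≤ 1 - r := by rw [hadef] at hra; linarith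
      have h1rpos : (0:ℝ) < 1 - r := lt_of_lt_of_le hε2 h1r
      have hr1 : r ≤ 1 := by linarith
      have hQ1 : 1 - r ≤ 1-2*t*r+t^2 := by rw [hQ]; nlinarith
      have hq : (1-2*t*r+t^2:ℝ)^(-α) ≤ (1-r)^(-α) :=
        Real.rpow_le_rpow_of_nonpos h1rpos hQ1 (by linarith)
      have h1 : (1-r^2:ℝ)^β ≤ (1-r)^β * M := by
        rw [hsplit r ⟨by linarith, hr1⟩]
        exact mul_le_mul_of_nonneg_left
          ((aux_rpow_bounds β (by linarith) (by linarith)).2)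
          (Real.rpow_nonneg (by linarith) _)
      calc F r ≤ ((1-r)^β * M) * (1-r)^(-α) := by
            exact mul_le_mul h1 hq (Real.rpow_nonneg (le_of_lt (hQpos r hr1)) _)
              (mul_nonneg (Real.rpow_nonneg (by linarith) _) hM0.le)
        _ = M * ((1-r)^β * (1-r)^(-α)) := by ring
        _ = M * (1-r)^(β-α) := by
            rw [← Real.rpow_add h1rpos]
            ring_nf
    have hg : IntervalIntegrable (fun r : ℝ => M * (1-r)^(β-α)) volume 0 a := by
      apply ContinuousOn.intervalIntegrable
      apply ContinuousOn.mul continuousOn_const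
      apply ContinuousOn.rpow_const
      · exact continuousOn_const.sub continuousOn_id
      · intro x hx
        rw [uIcc_of_le ha0] at hx
        left
        have : ε^2 ≤ 1 - x := by rw [hadef] at hx; have := hx.2; linarith [hx.2]
        exact ne_of_gt (lt_of_lt_of_le hε2 this)
    have h := intervalIntegral.integral_mono_on ha0 intA2 hg hpt
    have hcomp : (∫ r in (0:ℝ)..a, M * (1-r)^(β-α))
        = M * ((1 - (ε^2)^(β-α+1))/(β-α+1)) := by
      rw [intervalIntegral.integral_const_mul]
      have h3 := intervalIntegral.integral_comp_sub_left (a := (0:ℝ)) (b := a)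
        (fun u : ℝ => u^(β-α)) 1
      simp only [sub_zero] at h3
      rw [h3, show (1:ℝ) - a = ε^2 by rw [hadef]; ring,
        integral_rpow (Or.inr ⟨by linarith, ?_⟩), Real.one_rpow]
      rw [uIcc_of_le (by nlinarith : ε^2 ≤ 1)]
      intro hmem
      exact absurd hmem.1 (not_le.mpr hε2)
    have hD : (0:ℝ) < α - β - 1 := by linarith
    have hX1 : (1:ℝ) ≤ (ε^2)^(β-α+1) :=
      Real.one_le_rpow_of_pos_of_le_one_of_nonpos hε2 (by nlinarith) (by linarith)
    have hbound : M * ((1 - (ε^2)^(β-α+1))/(β-α+1)) ≤ M/(α-β-1) * (ε^2)^(β-α+1) := by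
      have he : (1 - (ε^2)^(β-α+1))/(β-α+1) = ((ε^2)^(β-α+1) - 1)/(α-β-1) := by
        rw [show β-α+1 = -(α-β-1) by ring, div_neg, ← neg_div]
        ring_nf
      rw [he]
      have : ((ε^2)^(β-α+1) - 1)/(α-β-1) ≤ (ε^2)^(β-α+1)/(α-β-1) := by
        gcongr
        linarith
      calc M * (((ε^2)^(β-α+1) - 1)/(α-β-1)) ≤ M * ((ε^2)^(β-α+1)/(α-β-1)) :=
            mul_le_mul_of_nonneg_left this hM0.le
        _ = M/(α-β-1) * (ε^2)^(β-α+1) := by ring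
    have hXe : (ε^2)^(β-α+1) = ε ^ (2*(β+1-α)) := by
      rw [hconv (β-α+1)]
      congr 1; ring
    calc (∫ r in (0:ℝ)..a, F r) ≤ ∫ r in (0:ℝ)..a, M * (1-r)^(β-α) := h
      _ = M * ((1 - (ε^2)^(β-α+1))/(β-α+1)) := hcomp
      _ ≤ M/(α-β-1) * (ε^2)^(β-α+1) := hbound
      _ = M/(α-β-1) * ε ^ (2*(β+1-α)) := by rw [hXe]
  have hP1' : (∫ r in (-1:ℝ)..0, F r) ≤ M/(β+1) * ε ^ (2*(β+1-α)) := by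
    calc (∫ r in (-1:ℝ)..0, F r) ≤ M/(β+1) := hP1
      _ ≤ M/(β+1) * ε ^ (2*(β+1-α)) :=
          le_mul_of_one_le_right (div_nonneg hM0.le hβ1.le) hεe1
  refine ⟨hlower, ?_⟩
  rw [hIu]
  have hrhs : (M/(β+1) + M/(α-β-1) + M/(β+1)) * ε ^ (2*(β+1-α))
      = M/(β+1) * ε ^ (2*(β+1-α))
        + (M/(α-β-1) * ε ^ (2*(β+1-α)) + M/(β+1) * ε ^ (2*(β+1-α))) := by ring
  rw [hrhs]
  linarith [hP1', hP2, hP3]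


/-- The angular kernel `Φ_{d,s,p}` for `d ≥ 2`. -/
def Phi (d : ℕ) (s p t : ℝ) : ℝ :=
  (2 * Real.pi ^ (((d : ℝ) - 1) / 2) / Real.Gamma (((d : ℝ) - 1) / 2)) *
    ∫ r in (-1 : ℝ)..1,
      (1 - r ^ 2) ^ (((d : ℝ) - 3) / 2) * (1 - 2 * t * r + t ^ 2) ^ (-((d : ℝ) + s * p) / 2)

theorem Phi_asymptotics_near_one (d : ℕ) (hd : 2 ≤ d) (s p : ℝ)
    (hs : 0 < s) (hs1 : s < 1) (hp : 1 ≤ p) :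
    ∃ c₁ c₂ δ : ℝ, 0 < c₁ ∧ c₁ ≤ c₂ ∧ 0 < δ ∧
      ∀ t ∈ Ioo (1 - δ) (1 : ℝ),
        c₁ * (1 - t) ^ (-1 - s * p) ≤ Phi d s p t ∧
        Phi d s p t ≤ c₂ * (1 - t) ^ (-1 - s * p) := by
  have hd2 : (2:ℝ) ≤ (d:ℝ) := by exact_mod_cast hd
  have hsp : 0 < s * p := mul_pos hs (by linarith)
  obtain ⟨c₁', c₂', hc₁, hc₂, H⟩ := integral_two_sided (((d:ℝ)-3)/2) (((d:ℝ)+s*p)/2)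
    (by linarith) (by linarith)
  set C0 : ℝ := 2 * Real.pi ^ (((d : ℝ) - 1) / 2) / Real.Gamma (((d : ℝ) - 1) / 2) with hC0def
  have hC0 : 0 < C0 :=
    div_pos (mul_pos two_pos (Real.rpow_pos_of_pos Real.pi_pos _))
      (Real.Gamma_pos_of_pos (by linarith : 0 < ((d:ℝ)-1)/2))
  have hexp : 2*((((d:ℝ)-3)/2)+1-(((d:ℝ)+s*p)/2)) = -1 - s*p := by ring
  have hPhi : ∀ t : ℝ, Phi d s p t
      = C0 * ∫ r in (-1:ℝ)..1, (1-r^2)^(((d:ℝ)-3)/2) * (1-2*t*r+t^2)^(-(((d:ℝ)+s*p)/2)) := by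
    intro t
    simp only [Phi, hC0def, neg_div]
  refine ⟨C0*c₁', C0*c₂', 1/2, mul_pos hC0 hc₁, ?_, by norm_num, ?_⟩
  · obtain ⟨h1, h2⟩ := H (3/4) ⟨by norm_num, by norm_num⟩
    have hX : (0:ℝ) < ((1:ℝ)-3/4)^(2*((((d:ℝ)-3)/2)+1-(((d:ℝ)+s*p)/2))) :=
      Real.rpow_pos_of_pos (by norm_num) _
    exact mul_le_mul_of_nonneg_left (le_of_mul_le_mul_right (h1.trans h2) hX) hC0.le
  · intro t ht
    have ht' : t ∈ Ioo (1/2:ℝ) 1 := by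
      refine ⟨?_, ht.2⟩
      have := ht.1
      norm_num at this
      exact this
    obtain ⟨hl, hu⟩ := H t ht'
    rw [hPhi t]
    constructor
    · calc C0*c₁'*(1-t)^(-1-s*p)
          = C0*(c₁'*(1-t)^(2*((((d:ℝ)-3)/2)+1-(((d:ℝ)+s*p)/2)))) := by rw [hexp]; ring
        _ ≤ C0 * ∫ r in (-1:ℝ)..1, (1-r^2)^(((d:ℝ)-3)/2) * (1-2*t*r+t^2)^(-(((d:ℝ)+s*p)/2)) :=
            mul_le_mul_of_nonneg_left hl hC0.le
    · calc C0 * ∫ r in (-1:ℝ)..1, (1-r^2)^(((d:ℝ)-3)/2) * (1-2*t*r+t^2)^(-(((d:ℝ)+s*p)/2))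
          ≤ C0*(c₂'*(1-t)^(2*((((d:ℝ)-3)/2)+1-(((d:ℝ)+s*p)/2)))) :=
            mul_le_mul_of_nonneg_left hu hC0.le
        _ = C0*c₂'*(1-t)^(-1-s*p) := by rw [hexp]; ring
end
end

section
/- Let d ≥ 2, 0 < s < 1, p ≥ 1. The function Φ(t) = ω_{d-2} ∫_{-1}^{1} (1-r²)^{(d-3)/2}(1-2tr+t²)^{-(d+sp)/2} dr is (strictly) increasing on [0,1). -/
open MeasureTheory Set

noncomputable section

/-!
With `w(r) = (1 - r²)^((d-3)/2)` and `u(t, r) = 1 - 2tr + t²`, the function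
`F_c(t) = ∫₋₁¹ w(r) u(t, r)^c dr` is, up to a constant, the mean of `x ↦ |x - ω|^{2c}` over the
sphere of radius `t`, and `Φ` is a positive multiple of `F_c` for `c = -(d + sp)/2`. Since
`Δ |x|^{2c} = 2c(2c + d - 2) |x|^{2c-2}`, the mean satisfies the radial equation
`t F_c'' + (d - 1) F_c' = t · (-2c)(2 - d - 2c) · F_{c-1}`; in the `r`-variable the angular part of
the Laplacian is a multiple of the derivative of `(1 - r²)^((d-1)/2) u^(c-1)`, which vanishes at
`r = ±1`. For `2c < 2 - d` the right-hand side is positive on `(0, 1)`, so `t^(d-1) F_c'(t)`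
increases strictly from `0`; hence `F_c' > 0` and `F_c` is strictly increasing on `[0, 1)`.
-/

open Real Interval intervalIntegral

theorem intervalIntegrable_one_sub_sq_rpow {α : ℝ} (hα : -1 < α) :
    IntervalIntegrable (fun r : ℝ => (1 - r ^ 2) ^ α) volume (-1) 1 := by
  have hright : IntervalIntegrable (fun r : ℝ => (1 - r ^ 2) ^ α) volume 0 1 := by
    have h1 : IntervalIntegrable (fun r : ℝ => (1 - r) ^ α) volume 0 1 := by
      simpa using ((intervalIntegrable_rpow' hα (a := 0) (b := 1)).comp_sub_left 1).symm
    have h2 : ContinuousOn (fun r : ℝ => (1 + r) ^ α) [[0, 1]] := by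
      refine ContinuousOn.rpow_const (by fun_prop) fun r hr => Or.inl ?_
      rw [uIcc_of_le zero_le_one] at hr
      linarith [hr.1]
    refine (intervalIntegrable_congr fun r hr => ?_).1 (h1.mul_continuousOn h2)
    rw [uIoc_of_le zero_le_one] at hr
    rw [← mul_rpow (by linarith [hr.2]) (by linarith [hr.1])]
    ring_nf
  have hleft : IntervalIntegrable (fun r : ℝ => (1 - r ^ 2) ^ α) volume (-1) 0 := by
    simpa using (IntervalIntegrable.iff_comp_neg).1 hright.symm
  exact hleft.trans hright

theorem hasDerivAt_integral_mul_of_continuousOn {w : ℝ → ℝ} {a b : ℝ}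
    (hw : IntervalIntegrable w volume a b) {U : Set ℝ} (hU : IsOpen U) {f f' : ℝ → ℝ → ℝ}
    (hf : ∀ t ∈ U, ContinuousOn (f t) [[a, b]])
    (hf' : ContinuousOn (Function.uncurry f') (U ×ˢ [[a, b]]))
    (hff' : ∀ t ∈ U, ∀ r ∈ [[a, b]], HasDerivAt (f · r) (f' t r) t) {t₀ : ℝ} (ht₀ : t₀ ∈ U) :
    HasDerivAt (fun t => ∫ r in a..b, w r * f t r) (∫ r in a..b, w r * f' t₀ r) t₀ := by
  obtain ⟨ε, hε, hball⟩ := Metric.isOpen_iff.1 hU t₀ ht₀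
  have hsub : Metric.closedBall t₀ (ε / 2) ⊆ U :=
    (Metric.closedBall_subset_ball (by linarith)).trans hball
  obtain ⟨C, hC⟩ := ((isCompact_closedBall t₀ (ε / 2)).prod isCompact_uIcc)
    |>.exists_bound_of_continuousOn (hf'.mono (prod_mono hsub subset_rfl))
  have hf'₀ : ContinuousOn (f' t₀) [[a, b]] :=
    hf'.comp (Continuous.prodMk_right t₀).continuousOn fun r hr => ⟨ht₀, hr⟩
  refine (hasDerivAt_integral_of_dominated_loc_of_deriv_le (F := fun t r => w r * f t r)
    (F' := fun t r => w r * f' t r) (bound := fun r => ‖w r‖ * C)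
    (Metric.closedBall_mem_nhds t₀ (half_pos hε)) ?_ (hw.mul_continuousOn (hf t₀ ht₀))
    (hw.mul_continuousOn hf'₀).def'.aestronglyMeasurable ?_ (hw.norm.mul_const C) ?_).2
  · filter_upwards [hU.mem_nhds ht₀] with t ht
    exact (hw.mul_continuousOn (hf t ht)).def'.aestronglyMeasurable
  · refine ae_of_all _ fun r hr t ht => ?_
    rw [norm_mul]
    exact mul_le_mul_of_nonneg_left (hC (t, r) ⟨ht, uIoc_subset_uIcc hr⟩) (norm_nonneg _)
  · exact ae_of_all _ fun r hr t ht => (hff' t (hsub ht) r (uIoc_subset_uIcc hr)).const_mul (w r)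

namespace AngularKernel

/-- `|ω - tσ|²` for unit vectors `ω, σ` with `⟪ω, σ⟫ = r`. -/
def distSq (t r : ℝ) : ℝ := 1 - 2 * t * r + t ^ 2

def kernelDeriv (c t r : ℝ) : ℝ := c * distSq t r ^ (c - 1) * (2 * t - 2 * r)

def kernelDeriv2 (c t r : ℝ) : ℝ :=
  c * ((c - 1) * distSq t r ^ (c - 2) * (2 * t - 2 * r) ^ 2 + 2 * distSq t r ^ (c - 1))

lemma distSq_pos {t r : ℝ} (ht : t ∈ Ioo (-1 : ℝ) 1) (hr : r ∈ Icc (-1 : ℝ) 1) :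
    0 < distSq t r := by
  obtain ⟨ht₁, ht₂⟩ := ht
  obtain ⟨hr₁, hr₂⟩ := hr
  unfold distSq
  rcases le_total 0 t with h | h
  · nlinarith [mul_nonneg h (sub_nonneg.2 hr₂)]
  · nlinarith [mul_nonneg (neg_nonneg.2 h) (neg_le_iff_add_nonneg.1 hr₁)]

lemma hasDerivAt_distSq_rpow (c : ℝ) {t r : ℝ} (hu : distSq t r ≠ 0) :
    HasDerivAt (fun t => distSq t r ^ c) (kernelDeriv c t r) t := by
  have h : HasDerivAt (fun t => distSq t r) (2 * t - 2 * r) t :=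
    (((hasDerivAt_const t 1).sub (((hasDerivAt_id t).const_mul 2).mul_const r)).add
      (hasDerivAt_pow 2 t)).congr_deriv (by simp; ring)
  exact (h.rpow_const (Or.inl hu)).congr_deriv (by unfold kernelDeriv; ring)

lemma hasDerivAt_kernelDeriv (c : ℝ) {t r : ℝ} (hu : distSq t r ≠ 0) :
    HasDerivAt (fun t => kernelDeriv c t r) (kernelDeriv2 c t r) t := by
  have h := ((hasDerivAt_distSq_rpow (c - 1) hu).const_mul c).mul
    (((hasDerivAt_id t).const_mul 2).sub_const (2 * r))
  refine h.congr_deriv ?_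
  simp only [kernelDeriv2, kernelDeriv, id, show c - 1 - 1 = c - 2 by ring]
  ring

lemma continuousOn_distSq_rpow (c : ℝ) :
    ContinuousOn (fun q : ℝ × ℝ => distSq q.1 q.2 ^ c) (Ioo (-1) 1 ×ˢ Icc (-1) 1) :=
  ContinuousOn.rpow_const (by unfold distSq; fun_prop)
    fun q hq => Or.inl (distSq_pos hq.1 hq.2).ne'

lemma continuousOn_kernelDeriv (c : ℝ) :
    ContinuousOn (Function.uncurry (kernelDeriv c)) (Ioo (-1) 1 ×ˢ Icc (-1) 1) := by
  have := continuousOn_distSq_rpow (c - 1)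
  unfold kernelDeriv Function.uncurry
  fun_prop

lemma continuousOn_kernelDeriv2 (c : ℝ) :
    ContinuousOn (Function.uncurry (kernelDeriv2 c)) (Ioo (-1) 1 ×ˢ Icc (-1) 1) := by
  have := continuousOn_distSq_rpow (c - 1)
  have := continuousOn_distSq_rpow (c - 2)
  unfold kernelDeriv2 Function.uncurry
  fun_prop

lemma continuousOn_distSq_rpow_right (c : ℝ) {t : ℝ} (ht : t ∈ Ioo (-1 : ℝ) 1) :
    ContinuousOn (fun r => distSq t r ^ c) (Icc (-1) 1) :=
  ContinuousOn.rpow_const (by unfold distSq; fun_prop) fun _ hr => Or.inl (distSq_pos ht hr).ne'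

lemma continuousOn_kernelDeriv_right (c : ℝ) {t : ℝ} (ht : t ∈ Ioo (-1 : ℝ) 1) :
    ContinuousOn (kernelDeriv c t) (Icc (-1) 1) := by
  have := continuousOn_distSq_rpow_right (c - 1) ht
  unfold kernelDeriv
  fun_prop

def weight (d : ℕ) (r : ℝ) : ℝ := (1 - r ^ 2) ^ (((d : ℝ) - 3) / 2)

/-- Up to the factor `ω_{d-2}`, the integral of `|ω - tσ|^{2c}` over `σ ∈ S^{d-1}`. -/
def sphereIntegral (d : ℕ) (c t : ℝ) : ℝ := ∫ r in (-1 : ℝ)..1, weight d r * distSq t r ^ c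

def sphereIntegralDeriv (d : ℕ) (c t : ℝ) : ℝ :=
  ∫ r in (-1 : ℝ)..1, weight d r * kernelDeriv c t r

def sphereIntegralDeriv2 (d : ℕ) (c t : ℝ) : ℝ :=
  ∫ r in (-1 : ℝ)..1, weight d r * kernelDeriv2 c t r

variable {d : ℕ} {c t : ℝ}

lemma weight_pos {r : ℝ} (hr : r ∈ Ioo (-1 : ℝ) 1) : 0 < weight d r :=
  rpow_pos_of_pos (by nlinarith [hr.1, hr.2]) _

lemma intervalIntegrable_weight (hd : 2 ≤ d) : IntervalIntegrable (weight d) volume (-1) 1 := by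
  have hd' : (2 : ℝ) ≤ d := by exact_mod_cast hd
  exact intervalIntegrable_one_sub_sq_rpow (by linarith)

lemma intervalIntegrable_weight_mul (hd : 2 ≤ d) {f : ℝ → ℝ} (hf : ContinuousOn f (Icc (-1) 1)) :
    IntervalIntegrable (fun r => weight d r * f r) volume (-1) 1 :=
  (intervalIntegrable_weight hd).mul_continuousOn (by rwa [uIcc_of_le (by norm_num)])

lemma hasDerivAt_sphereIntegral (hd : 2 ≤ d) (ht : t ∈ Ioo (-1 : ℝ) 1) :
    HasDerivAt (sphereIntegral d c) (sphereIntegralDeriv d c t) t := by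
  refine hasDerivAt_integral_mul_of_continuousOn (intervalIntegrable_weight hd) isOpen_Ioo
    ?_ ?_ ?_ ht <;> rw [uIcc_of_le (by norm_num)]
  · exact fun t ht => continuousOn_distSq_rpow_right c ht
  · exact continuousOn_kernelDeriv c
  · exact fun t ht r hr => hasDerivAt_distSq_rpow c (distSq_pos ht hr).ne'

lemma hasDerivAt_sphereIntegralDeriv (hd : 2 ≤ d) (ht : t ∈ Ioo (-1 : ℝ) 1) :
    HasDerivAt (sphereIntegralDeriv d c) (sphereIntegralDeriv2 d c t) t := by
  refine hasDerivAt_integral_mul_of_continuousOn (intervalIntegrable_weight hd) isOpen_Ioo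
    ?_ ?_ ?_ ht <;> rw [uIcc_of_le (by norm_num)]
  · exact fun t ht => continuousOn_kernelDeriv_right c ht
  · exact continuousOn_kernelDeriv2 c
  · exact fun t ht r hr => hasDerivAt_kernelDeriv c (distSq_pos ht hr).ne'

lemma sphereIntegral_pos (hd : 2 ≤ d) (ht : t ∈ Ioo (-1 : ℝ) 1) : 0 < sphereIntegral d c t :=
  intervalIntegral_pos_of_pos_on
    (intervalIntegrable_weight_mul hd (continuousOn_distSq_rpow_right c ht))
    (fun r hr => mul_pos (weight_pos hr)
      (rpow_pos_of_pos (distSq_pos ht (Ioo_subset_Icc_self hr)) _))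
    (by norm_num)

def flux (d : ℕ) (c t r : ℝ) : ℝ := (1 - r ^ 2) ^ (((d : ℝ) - 1) / 2) * distSq t r ^ (c - 1)

def fluxDeriv (d : ℕ) (c t r : ℝ) : ℝ :=
  -((d : ℝ) - 1) * r * distSq t r ^ (c - 1) -
    2 * t * (c - 1) * (1 - r ^ 2) * distSq t r ^ (c - 2)

lemma hasDerivAt_flux (ht : t ∈ Ioo (-1 : ℝ) 1) {r : ℝ} (hr : r ∈ Ioo (-1 : ℝ) 1) :
    HasDerivAt (flux d c t) (weight d r * fluxDeriv d c t r) r := by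
  have hq : 0 < 1 - r ^ 2 := by nlinarith [hr.1, hr.2]
  have hu := (distSq_pos ht (Ioo_subset_Icc_self hr)).ne'
  have hq' : HasDerivAt (fun r : ℝ => 1 - r ^ 2) (-2 * r) r :=
    ((hasDerivAt_pow 2 r).const_sub 1).congr_deriv (by simp)
  have hu' : HasDerivAt (fun r => distSq t r) (-2 * t) r :=
    ((((hasDerivAt_id r).const_mul (2 * t)).const_sub 1).add_const (t ^ 2)).congr_deriv (by simp)
  refine ((hq'.rpow_const (p := ((d : ℝ) - 1) / 2) (Or.inl hq.ne')).mul
    (hu'.rpow_const (p := c - 1) (Or.inl hu))).congr_deriv ?_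
  rw [show ((d : ℝ) - 1) / 2 - 1 = ((d : ℝ) - 3) / 2 by ring,
    show ((d : ℝ) - 1) / 2 = ((d : ℝ) - 3) / 2 + 1 by ring, rpow_add_one hq.ne',
    show c - 1 - 1 = c - 2 by ring]
  simp only [weight, fluxDeriv]
  ring

lemma integral_weight_mul_fluxDeriv (hd : 2 ≤ d) (ht : t ∈ Ioo (-1 : ℝ) 1) :
    ∫ r in (-1 : ℝ)..1, weight d r * fluxDeriv d c t r = 0 := by
  have hd' : (2 : ℝ) ≤ d := by exact_mod_cast hd
  have hexp : 0 < ((d : ℝ) - 1) / 2 := by linarith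
  have hcont : ContinuousOn (flux d c t) (Icc (-1) 1) :=
    (ContinuousOn.rpow_const (by fun_prop) fun _ _ => Or.inr hexp.le).mul
      (continuousOn_distSq_rpow_right _ ht)
  have hint : IntervalIntegrable (fun r => weight d r * fluxDeriv d c t r) volume (-1) 1 := by
    refine intervalIntegrable_weight_mul hd ?_
    have := continuousOn_distSq_rpow_right (c - 1) ht
    have := continuousOn_distSq_rpow_right (c - 2) ht
    unfold fluxDeriv
    fun_prop
  rw [integral_eq_sub_of_hasDerivAt_of_le (by norm_num) hcont (fun r hr => hasDerivAt_flux ht hr)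
    hint]
  simp [flux, zero_rpow hexp.ne']

lemma radial_laplacian (d : ℕ) (c t r : ℝ) (hu : distSq t r ≠ 0) :
    t * kernelDeriv2 c t r + ((d : ℝ) - 1) * kernelDeriv c t r =
      t * (-2 * c * (2 - d - 2 * c)) * distSq t r ^ (c - 1) + 2 * c * fluxDeriv d c t r := by
  have h : distSq t r ^ (c - 1) = distSq t r ^ (c - 2) * distSq t r := by
    rw [← rpow_add_one hu]; ring_nf
  simp only [kernelDeriv2, kernelDeriv, fluxDeriv, h]
  unfold distSq
  ring

lemma sphereIntegral_ode (hd : 2 ≤ d) (ht : t ∈ Ioo (-1 : ℝ) 1) :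
    t * sphereIntegralDeriv2 d c t + ((d : ℝ) - 1) * sphereIntegralDeriv d c t =
      t * (-2 * c * (2 - d - 2 * c)) * sphereIntegral d (c - 1) t := by
  have hu₁ := continuousOn_distSq_rpow_right (c - 1) ht
  have hu₂ := continuousOn_distSq_rpow_right (c - 2) ht
  have hk₁ := continuousOn_kernelDeriv_right c ht
  have hk₂ : ContinuousOn (kernelDeriv2 c t) (Icc (-1) 1) := by unfold kernelDeriv2; fun_prop
  have hflux : ContinuousOn (fluxDeriv d c t) (Icc (-1) 1) := by unfold fluxDeriv; fun_prop
  calc t * sphereIntegralDeriv2 d c t + ((d : ℝ) - 1) * sphereIntegralDeriv d c t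
      = ∫ r in (-1 : ℝ)..1, weight d r *
          (t * kernelDeriv2 c t r + ((d : ℝ) - 1) * kernelDeriv c t r) := by
        rw [sphereIntegralDeriv2, sphereIntegralDeriv, ← intervalIntegral.integral_const_mul,
          ← intervalIntegral.integral_const_mul,
          ← integral_add ((intervalIntegrable_weight_mul hd hk₂).const_mul t)
            ((intervalIntegrable_weight_mul hd hk₁).const_mul _)]
        congr 1 with r
        ring
    _ = ∫ r in (-1 : ℝ)..1,
          t * (-2 * c * (2 - d - 2 * c)) * (weight d r * distSq t r ^ (c - 1)) +
            2 * c * (weight d r * fluxDeriv d c t r) := by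
        refine integral_congr fun r hr => ?_
        rw [uIcc_of_le (by norm_num)] at hr
        simp only [radial_laplacian d c t r (distSq_pos ht hr).ne']
        ring
    _ = t * (-2 * c * (2 - d - 2 * c)) * sphereIntegral d (c - 1) t := by
        rw [integral_add ((intervalIntegrable_weight_mul hd hu₁).const_mul _)
          ((intervalIntegrable_weight_mul hd hflux).const_mul _),
          intervalIntegral.integral_const_mul, intervalIntegral.integral_const_mul,
          integral_weight_mul_fluxDeriv hd ht, mul_zero, add_zero, sphereIntegral]

lemma sphereIntegralDeriv_pos (hd : 2 ≤ d) (hc : 2 * c < 2 - d) (ht : t ∈ Ioo (0 : ℝ) 1) :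
    0 < sphereIntegralDeriv d c t := by
  have hd' : (2 : ℝ) ≤ d := by exact_mod_cast hd
  have hK : 0 < -2 * c * (2 - d - 2 * c) := mul_pos (by linarith) (by linarith)
  obtain ⟨n, rfl⟩ : ∃ n, d = n + 2 := ⟨d - 2, by omega⟩
  set K := -2 * c * (2 - (n + 2 : ℕ) - 2 * c)
  have hIoo := Ico_subset_Ioo_left (b := (1 : ℝ)) (by norm_num : (-1 : ℝ) < 0)
  have hW : ∀ x ∈ Ico (0 : ℝ) 1,
      HasDerivAt (fun x => x ^ (n + 1) * sphereIntegralDeriv (n + 2) c x)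
        (x ^ n * (x * K * sphereIntegral (n + 2) (c - 1) x)) x := by
    intro x hx
    refine ((hasDerivAt_pow (n + 1) x).mul
      (hasDerivAt_sphereIntegralDeriv hd (hIoo hx))).congr_deriv ?_
    rw [← sphereIntegral_ode hd (hIoo hx)]
    push_cast
    ring
  have hmono :
      StrictMonoOn (fun x => x ^ (n + 1) * sphereIntegralDeriv (n + 2) c x) (Ico 0 1) := by
    refine strictMonoOn_of_deriv_pos (convex_Ico 0 1)
      (fun x hx => (hW x hx).continuousAt.continuousWithinAt) fun x hx => ?_
    rw [interior_Ico] at hx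
    rw [(hW x (Ioo_subset_Ico_self hx)).deriv]
    have := sphereIntegral_pos (c := c - 1) hd (hIoo (Ioo_subset_Ico_self hx))
    have := hx.1
    positivity
  have := hmono ⟨le_rfl, one_pos⟩ (Ioo_subset_Ico_self ht) ht.1
  simp only [zero_pow n.add_one_ne_zero, zero_mul] at this
  exact pos_of_mul_pos_right this (pow_nonneg ht.1.le _)

lemma sphereIntegral_strictMonoOn (hd : 2 ≤ d) (hc : 2 * c < 2 - d) :
    StrictMonoOn (sphereIntegral d c) (Ico 0 1) := by
  have hIoo := Ico_subset_Ioo_left (b := (1 : ℝ)) (by norm_num : (-1 : ℝ) < 0)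
  refine strictMonoOn_of_deriv_pos (convex_Ico 0 1)
    (fun x hx => (hasDerivAt_sphereIntegral hd (hIoo hx)).continuousAt.continuousWithinAt)
    fun x hx => ?_
  rw [interior_Ico] at hx
  rw [(hasDerivAt_sphereIntegral hd (hIoo (Ioo_subset_Ico_self hx))).deriv]
  exact sphereIntegralDeriv_pos hd hc hx

end AngularKernel

theorem Phi_strictMonoOn_general (d : ℕ) (hd : 2 ≤ d) (s p : ℝ)
    (hs : 0 < s) (hp : 1 ≤ p) :
    StrictMonoOn (Phi d s p) (Ico (0 : ℝ) 1) := by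
  have hd' : (2 : ℝ) ≤ d := by exact_mod_cast hd
  have hsp : 0 < s * p := mul_pos hs (by linarith)
  have hC : 0 < 2 * π ^ (((d : ℝ) - 1) / 2) / Gamma (((d : ℝ) - 1) / 2) :=
    div_pos (by positivity) (Gamma_pos_of_pos (by linarith))
  intro a ha b hb hab
  exact mul_lt_mul_of_pos_left
    (AngularKernel.sphereIntegral_strictMonoOn hd (by linarith) ha hb hab) hC

theorem Phi_strictMonoOn (d : ℕ) (hd : 2 ≤ d) (s p : ℝ)
    (hs : 0 < s) (hs1 : s < 1) (hp : 1 ≤ p) :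
    StrictMonoOn (Phi d s p) (Ico (0 : ℝ) 1) :=
  Phi_strictMonoOn_general d hd s p hs hp
end
end

section
/- Let q ≥ 1, γ ∈ ℝ, γ ≠ 0, and let u : (0,∞) → ℝ be measurable with ∫_0^∞ |u(x)|^q x^{γ−1} dx < ∞. Then for every y > 0 with y ≠ 1, ∫_0^∞ |u(x) − u(xy)|^q x^{γ−1} dx ≥ |1 − y^{−γ/q}|^q ∫_0^∞ |u(x)|^q x^{γ−1} dx. -/
/-! In `L^q` of the measure `x^(γ-1) dx` on `(0, ∞)`, the dilation `u ↦ u(· * y)` multiplies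
the norm by `y^(-γ/q)`. The triangle inequality for `u = (u - u(· * y)) + u(· * y)` and for
`u(· * y) = u - (u - u(· * y))` then bounds `|1 - y^(-γ/q)| ‖u‖` by `‖u - u(· * y)‖`. -/

open MeasureTheory Set
open scoped ENNReal NNReal

noncomputable section

def powerMeasure (γ : ℝ) : Measure ℝ :=
  (volume.restrict (Ioi 0)).withDensity fun x => ENNReal.ofReal (x ^ (γ - 1))

theorem lintegral_powerMeasure (γ : ℝ) (g : ℝ → ℝ≥0∞) :
    ∫⁻ x, g x ∂powerMeasure γ = ∫⁻ x in Ioi 0, ENNReal.ofReal (x ^ (γ - 1)) * g x :=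
  lintegral_withDensity_eq_lintegral_mul_non_measurable _ (by fun_prop)
    (.of_forall fun _ => ENNReal.ofReal_lt_top) g

theorem lintegral_Ioi_comp_mul_right (g : ℝ → ℝ≥0∞) {y : ℝ} (hy : 0 < y) :
    ∫⁻ x in Ioi 0, g (x * y) = ENNReal.ofReal y⁻¹ * ∫⁻ x in Ioi 0, g x := by
  let e := MeasurableEquiv.mulRight₀ y hy.ne'
  have hmap :
      (volume.restrict (Ioi 0)).map e = ENNReal.ofReal y⁻¹ • volume.restrict (Ioi 0) := by
    have hpre : (· * y) ⁻¹' Ioi 0 = Ioi (0 : ℝ) := by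
      simpa using preimage_mul_const_Ioi₀ (0 : ℝ) hy
    rw [MeasurableEquiv.coe_mulRight₀, ← hpre, ← Measure.restrict_map (measurable_mul_const y)
      measurableSet_Ioi, Real.map_volume_mul_right hy.ne', Measure.restrict_smul,
      abs_of_pos (inv_pos.mpr hy), hpre]
  rw [← smul_eq_mul, ← lintegral_smul_measure, ← hmap, lintegral_map_equiv]
  rfl

theorem lintegral_powerMeasure_comp_mul_right (γ : ℝ) (g : ℝ → ℝ≥0∞) {y : ℝ} (hy : 0 < y) :
    ∫⁻ x, g (x * y) ∂powerMeasure γ = ENNReal.ofReal (y ^ (-γ)) * ∫⁻ x, g x ∂powerMeasure γ := by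
  set h : ℝ → ℝ≥0∞ := fun x => ENNReal.ofReal (x ^ (γ - 1)) * g x
  have hweight : ∀ x ∈ Ioi (0 : ℝ),
      ENNReal.ofReal (x ^ (γ - 1)) * g (x * y) = ENNReal.ofReal (y ^ (1 - γ)) * h (x * y) := by
    intro x hx
    rw [← mul_assoc, ← ENNReal.ofReal_mul (by positivity), Real.mul_rpow (le_of_lt hx) hy.le,
      mul_left_comm, ← Real.rpow_add hy, sub_add_sub_cancel', sub_self, Real.rpow_zero, mul_one]
  have hexp : y ^ (1 - γ) * y⁻¹ = y ^ (-γ) := by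
    rw [← Real.rpow_neg_one, ← Real.rpow_add hy]
    ring_nf
  calc ∫⁻ x, g (x * y) ∂powerMeasure γ
      = ENNReal.ofReal (y ^ (1 - γ)) * ∫⁻ x in Ioi 0, h (x * y) := by
        rw [lintegral_powerMeasure, setLIntegral_congr_fun measurableSet_Ioi hweight,
          lintegral_const_mul' _ _ ENNReal.ofReal_ne_top]
    _ = ENNReal.ofReal (y ^ (-γ)) * ∫⁻ x, g x ∂powerMeasure γ := by
        rw [lintegral_Ioi_comp_mul_right h hy, ← mul_assoc, ← ENNReal.ofReal_mul (by positivity),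
          hexp, lintegral_powerMeasure]

theorem eLpNorm_comp_mul_right_powerMeasure {E : Type*} [NormedAddCommGroup E] (γ : ℝ)
    (f : ℝ → E) {p : ℝ≥0} (hp : p ≠ 0) {y : ℝ} (hy : 0 < y) :
    eLpNorm (fun x => f (x * y)) p (powerMeasure γ)
      = ENNReal.ofReal (y ^ (-γ / p)) * eLpNorm f p (powerMeasure γ) := by
  rw [eLpNorm_nnreal_eq_lintegral hp, eLpNorm_nnreal_eq_lintegral hp,
    lintegral_powerMeasure_comp_mul_right γ (fun x => ‖f x‖ₑ ^ (p : ℝ)) hy,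
    ENNReal.mul_rpow_of_nonneg _ _ (by positivity), ENNReal.ofReal_rpow_of_pos (by positivity),
    ← Real.rpow_mul hy.le, mul_one_div]

theorem setLIntegral_Ioi_abs_rpow_mul_rpow_eq_eLpNorm_rpow (γ : ℝ) (v : ℝ → ℝ) {p : ℝ≥0}
    (hp : p ≠ 0) :
    ∫⁻ x in Ioi 0, ENNReal.ofReal (|v x| ^ (p : ℝ) * x ^ (γ - 1))
      = eLpNorm v p (powerMeasure γ) ^ (p : ℝ) := by
  rw [eLpNorm_nnreal_pow_eq_lintegral hp, lintegral_powerMeasure]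
  refine setLIntegral_congr_fun measurableSet_Ioi fun x hx => ?_
  rw [mul_comm, ENNReal.ofReal_mul (Real.rpow_nonneg (le_of_lt hx) _), Real.enorm_eq_ofReal_abs,
    ENNReal.ofReal_rpow_of_nonneg (abs_nonneg _) p.coe_nonneg]

theorem ENNReal.ofReal_abs_one_sub_mul_le {a b : ℝ≥0∞} {c : ℝ} (hc : 0 ≤ c) (ha : a ≠ ⊤)
    (hab : a ≤ b + ENNReal.ofReal c * a) (hba : ENNReal.ofReal c * a ≤ b + a) :
    ENNReal.ofReal |1 - c| * a ≤ b := by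
  rcases le_total c 1 with hc1 | hc1
  · rw [abs_of_nonneg (sub_nonneg.mpr hc1), ENNReal.ofReal_sub _ hc, ENNReal.ofReal_one,
      ENNReal.sub_mul fun _ _ => ha, one_mul]
    exact tsub_le_iff_right.mpr hab
  · rw [abs_of_nonpos (sub_nonpos.mpr hc1), neg_sub, ENNReal.ofReal_sub _ zero_le_one,
      ENNReal.ofReal_one, ENNReal.sub_mul fun _ _ => ha, one_mul]
    exact tsub_le_iff_right.mpr hba

theorem one_dimensional_key_estimate_general (q γ : ℝ) (hq : 1 ≤ q)
    (u : ℝ → ℝ) (hu : Measurable u)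
    (hfin : (∫⁻ x in Ioi (0 : ℝ), ENNReal.ofReal (|u x| ^ q * x ^ (γ - 1))) < ⊤)
    (y : ℝ) (hy : 0 < y) :
    (∫⁻ x in Ioi (0 : ℝ), ENNReal.ofReal (|u x - u (x * y)| ^ q * x ^ (γ - 1)))
      ≥ ENNReal.ofReal (|1 - y ^ (-γ / q)| ^ q) *
        ∫⁻ x in Ioi (0 : ℝ), ENNReal.ofReal (|u x| ^ q * x ^ (γ - 1)) := by
  lift q to ℝ≥0 using zero_le_one.trans hq
  have hq0 : q ≠ 0 := by rintro rfl; norm_num at hq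
  have hq1 : (1 : ℝ≥0∞) ≤ q := by exact_mod_cast hq
  set μ := powerMeasure γ
  set g : ℝ → ℝ := fun x => u (x * y)
  set d : ℝ → ℝ := fun x => u x - u (x * y)
  have hg : Measurable g := hu.comp (measurable_mul_const y)
  have hd : Measurable d := hu.sub hg
  have hu_le : eLpNorm u q μ ≤ eLpNorm d q μ + eLpNorm g q μ := by
    have hdg : d + g = u := by ext x; simp [d, g]
    simpa only [hdg] using eLpNorm_add_le hd.aestronglyMeasurable hg.aestronglyMeasurable hq1
  have hg_le : eLpNorm g q μ ≤ eLpNorm d q μ + eLpNorm u q μ := by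
    have hud : u - d = g := by ext x; simp [d, g]
    simpa only [hud, add_comm] using
      eLpNorm_sub_le hu.aestronglyMeasurable hd.aestronglyMeasurable hq1
  rw [eLpNorm_comp_mul_right_powerMeasure γ u hq0 hy] at hu_le hg_le
  rw [setLIntegral_Ioi_abs_rpow_mul_rpow_eq_eLpNorm_rpow γ u hq0] at hfin ⊢
  rw [setLIntegral_Ioi_abs_rpow_mul_rpow_eq_eLpNorm_rpow γ d hq0]
  have hu_fin : eLpNorm u q μ ≠ ⊤ := by simpa [hq0] using hfin.ne
  calc ENNReal.ofReal (|1 - y ^ (-γ / q)| ^ (q : ℝ)) * eLpNorm u q μ ^ (q : ℝ)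
      = (ENNReal.ofReal |1 - y ^ (-γ / q)| * eLpNorm u q μ) ^ (q : ℝ) := by
        rw [ENNReal.mul_rpow_of_nonneg _ _ q.coe_nonneg,
          ENNReal.ofReal_rpow_of_nonneg (abs_nonneg _) q.coe_nonneg]
    _ ≤ eLpNorm d q μ ^ (q : ℝ) :=
        ENNReal.rpow_le_rpow
          (ENNReal.ofReal_abs_one_sub_mul_le (by positivity) hu_fin hu_le hg_le) q.coe_nonneg

theorem one_dimensional_key_estimate (q γ : ℝ) (hq : 1 ≤ q) (hγ : γ ≠ 0)
    (u : ℝ → ℝ) (hu : Measurable u)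
    (hfin : (∫⁻ x in Ioi (0 : ℝ), ENNReal.ofReal (|u x| ^ q * x ^ (γ - 1))) < ⊤)
    (y : ℝ) (hy : 0 < y) (hy1 : y ≠ 1) :
    (∫⁻ x in Ioi (0 : ℝ), ENNReal.ofReal (|u x - u (x * y)| ^ q * x ^ (γ - 1)))
      ≥ ENNReal.ofReal (|1 - y ^ (-γ / q)| ^ q) *
        ∫⁻ x in Ioi (0 : ℝ), ENNReal.ofReal (|u x| ^ q * x ^ (γ - 1)) :=
  one_dimensional_key_estimate_general q γ hq u hu hfin y hy
end
end
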